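/- arXiv:1711.07713 — 8 statements merged into one kernel-verified Lean document; each statement's English description precedes it below -/
import Mathlib

section
/- Let E be a set and Z : E⁴ → ℝ. Define NCycle_n(x) = ∑_{j=0}^{n-1} Z(x_j, x_{j+1}, x_{j+2}, x_{j+3}) with indices mod n. Then for all a,b,c,d,e,f,g ∈ E: NCycle_7(a,b,c,d,e,f,g) = −NCycle_6(e,f,g,d,e,f) + NCycle_4(e,f,g,d) + NCycle_6(e,f,a,d,e,f) − NCycle_4(e,f,a,d) + NCycle_6(e,f,g,c,e,f) − NCycle_4(e,f,g,c) − NCycle_6(e,f,a,c,e,f) + NCycle_4(e,f,a,c) + NCycle_6(a,b,c,d,e,f) + NCycle_6(a,b,c,e,f,g) − NCycle_5(a,b,c,e,f). -/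
/-- Cyclic sum of `Z` over length-4 cyclic factors of a word of length `n`. -/
def ncyc {E : Type*} (Z : E → E → E → E → ℝ) (n : ℕ) (x : ℕ → E) : ℝ :=
  ∑ j ∈ Finset.range n,
    Z (x (j % n)) (x ((j+1) % n)) (x ((j+2) % n)) (x ((j+3) % n))

/-- View a finite tuple as a periodic word indexed by `ℕ`. -/
def ofT {E : Type*} {n : ℕ} [NeZero n] (v : Fin n → E) : ℕ → E :=
  fun j => v (Fin.ofNat n j)

section

variable {E : Type*} {n : ℕ} [NeZero n]

theorem ofT_mod (v : Fin n → E) (m : ℕ) :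
    ofT v (m % n) = ofT v m := by
  unfold ofT; congr 1; ext; simp

theorem ofT_val (v : Fin n → E) (i : Fin n) :
    ofT v i = v i := by
  simp [ofT]

theorem ofT_val_add (v : Fin n → E) (i : Fin n) (k : ℕ) :
    ofT v (i + k) = v (i + Fin.ofNat n k) := by
  unfold ofT; congr 1; ext; simp [Fin.val_add]

theorem ncyc_ofT (Z : E → E → E → E → ℝ) (v : Fin n → E) :
    ncyc Z n (ofT v) = ∑ i : Fin n, Z (v i) (v (i + 1)) (v (i + 2)) (v (i + 3)) := by
  simp only [ncyc, ← Fin.sum_univ_eq_sum_range, ofT_mod, ofT_val, ofT_val_add]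
  rfl -- the numeral `k : Fin n` unfolds to `Fin.ofNat n k`

end

/-- `NCycle_7` as a combination of `NCycle_4`, `NCycle_5`, `NCycle_6`. -/
theorem stmt3 {E : Type*} (Z : E → E → E → E → ℝ) (a b c d e f g : E) :
    ncyc Z 7 (ofT ![a,b,c,d,e,f,g])
      = -ncyc Z 6 (ofT ![e,f,g,d,e,f]) + ncyc Z 4 (ofT ![e,f,g,d])
        + ncyc Z 6 (ofT ![e,f,a,d,e,f]) - ncyc Z 4 (ofT ![e,f,a,d])
        + ncyc Z 6 (ofT ![e,f,g,c,e,f]) - ncyc Z 4 (ofT ![e,f,g,c])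
        - ncyc Z 6 (ofT ![e,f,a,c,e,f]) + ncyc Z 4 (ofT ![e,f,a,c])
        + ncyc Z 6 (ofT ![a,b,c,d,e,f])
        + ncyc Z 6 (ofT ![a,b,c,e,f,g]) - ncyc Z 5 (ofT ![a,b,c,e,f]) := by
  simp only [ncyc_ofT, Fin.sum_univ_four, Fin.sum_univ_five, Fin.sum_univ_six,
    Fin.sum_univ_seven]
  simp only [Fin.isValue, Fin.reduceAdd, Matrix.cons_val_zero, Matrix.cons_val_one,
    Matrix.cons_val]
  ring
end

section
/- Let E be a finite set with distinguished element 0, and Z : E⁴ → ℝ. Define NCycle_7 as the cyclic sum of Z over length-4 cyclic factors of a word of length 7. If NCycle_7(a,b,c,d,0,0,0) = 0 for all a,b,c,d ∈ E, then there exists a function W : E³ → ℝ such that Z(a,b,c,d) = W(b,c,d) − W(a,b,c) for all a,b,c,d ∈ E. In fact one may take W(a,b,c) = Z(0,0,0,a) + Z(0,0,a,b) + Z(0,a,b,c). -/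
/-!
Expand the hypothesis at `(a,b,c,d)` and at `(b,c,d,0)`: the two cyclic sums share the
three terms `Z(b,c,d,0) + Z(c,d,0,0) + Z(d,0,0,0)`, and what remains of their difference is
`Z(a,b,c,d) - Z(0,0,0,0) + W(a,b,c) - W(b,c,d)`. The hypothesis at `(0,0,0,0)` reads
`7 Z(0,0,0,0) = 0`.
-/

lemma ncyc_seven_ofT {E : Type*} (Z : E → E → E → E → ℝ) (a b c d e f g : E) :
    ncyc Z 7 (ofT ![a, b, c, d, e, f, g]) =
      Z a b c d + Z b c d e + Z c d e f + Z d e f g + Z e f g a + Z f g a b + Z g a b c := by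
  simp only [ncyc, ofT, Finset.sum_range_succ, Finset.sum_range_zero, zero_add]
  rfl

theorem stmt6_general {E : Type*} (e : E) (Z : E → E → E → E → ℝ)
    (h : ∀ a b c d : E, ncyc Z 7 (ofT ![a,b,c,d,e,e,e]) = 0) :
    ∃ W : E → E → E → ℝ,
      (∀ a b c : E, W a b c = Z e e e a + Z e e a b + Z e a b c) ∧
      (∀ a b c d : E, Z a b c d = W b c d - W a b c) := by
  refine ⟨fun a b c => Z e e e a + Z e e a b + Z e a b c, fun _ _ _ => rfl, ?_⟩
  intro a b c d
  have hZeeee : Z e e e e = 0 := by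
    have := h e e e e
    rw [ncyc_seven_ofT] at this
    linarith
  have habcd := h a b c d
  have hbcde := h b c d e
  rw [ncyc_seven_ofT] at habcd hbcde
  linarith

/-- If `NCycle_7(a,b,c,d,0,0,0) = 0` for all `a,b,c,d`, then `Z` is a gradient:
`Z(a,b,c,d) = W(b,c,d) - W(a,b,c)`, and one may take
`W(a,b,c) = Z(0,0,0,a) + Z(0,0,a,b) + Z(0,a,b,c)`. -/
theorem stmt6 {E : Type*} [Fintype E] (e : E) (Z : E → E → E → E → ℝ)
    (h : ∀ a b c d : E, ncyc Z 7 (ofT ![a,b,c,d,e,e,e]) = 0) :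
    ∃ W : E → E → E → ℝ,
      (∀ a b c : E, W a b c = Z e e e a + Z e e a b + Z e a b c) ∧
      (∀ a b c d : E, Z a b c d = W b c d - W a b c) :=
  stmt6_general e Z h
end

section
/- Let E be a set with distinguished element 0 and Z : E⁴ → ℝ. Define, for a word a of length 7, Master_7(a) = ∑_{w ∈ Sub(a,4)} Z(w) − ∑_{w ∈ Sub(a^{4},4)} Z(w), where Sub(u,4) is the multiset of consecutive length-4 factors and a^{4} is a with its 4th letter deleted. If Master_7(a,b,c,d,0,0,0) = 0 for all a,b,c,d ∈ E, then Master_7(a₁,…,a₇) = 0 for all a₁,…,a₇ ∈ E. -/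
/-- `Master_7(a₁,…,a₇)`: sum of `Z` over length-4 factors of the word minus the
sum over length-4 factors of the word with the 4th letter deleted. -/
def master7 {E : Type*} (Z : E → E → E → E → ℝ)
    (a1 a2 a3 a4 a5 a6 a7 : E) : ℝ :=
  Z a1 a2 a3 a4 + Z a2 a3 a4 a5 + Z a3 a4 a5 a6 + Z a4 a5 a6 a7
    - Z a1 a2 a3 a5 - Z a2 a3 a5 a6 - Z a3 a5 a6 a7

/-- If `Master_7(a,b,c,d,0,0,0) = 0` for all `a,b,c,d`, then `Master_7 ≡ 0`. -/
theorem stmt7 {E : Type*} (e : E) (Z : E → E → E → E → ℝ)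
    (h : ∀ a b c d : E, master7 Z a b c d e e e = 0) :
    ∀ a1 a2 a3 a4 a5 a6 a7 : E, master7 Z a1 a2 a3 a4 a5 a6 a7 = 0 := by
  intro a1 a2 a3 a4 a5 a6 a7
  simp only [master7] at h ⊢
  linear_combination h a1 a2 a3 a4 + h a2 a3 a4 a5 + h a3 a4 a5 a6 + h a4 a5 a6 a7
    - h a1 a2 a3 a5 - h a2 a3 a5 a6 - h a3 a5 a6 a7
end

section
/- Let E be a finite set and M, M' : E × E → ℝ two positive Markov kernels. The following are equivalent: (1) M(a,u)M(u,v)M(v,d) / (M(a,b)M(b,c)M(c,d)) = M'(a,u)M'(u,v)M'(v,d) / (M'(a,b)M'(b,c)M'(c,d)) for all a,b,c,d,u,v ∈ E; (2) the same identity with d = a, for all a,b,c,u,v ∈ E; (3) there exists α > 0 such that M'(a,b)M'(b,c) / (M(a,b)M(b,c)) = α · M'(a,c)/M(a,c) for all a,b,c ∈ E. -/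
/-- Lemma 5.5 (points (1)–(3)): equivalence of the three ratio conditions for
two positive Markov kernels `M`, `M'` on a finite set. -/
theorem stmt12 {E : Type*} [Fintype E] [Nonempty E]
    (M M' : E → E → ℝ)
    (hMpos : ∀ i j, 0 < M i j) (hMrow : ∀ i, ∑ j, M i j = 1)
    (hM'pos : ∀ i j, 0 < M' i j) (hM'row : ∀ i, ∑ j, M' i j = 1) :
    ((∀ a b c d u v : E,
        M a u * M u v * M v d / (M a b * M b c * M c d)
          = M' a u * M' u v * M' v d / (M' a b * M' b c * M' c d))
      ↔ (∀ a b c u v : E,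
          M a u * M u v * M v a / (M a b * M b c * M c a)
            = M' a u * M' u v * M' v a / (M' a b * M' b c * M' c a)))
    ∧ ((∀ a b c u v : E,
          M a u * M u v * M v a / (M a b * M b c * M c a)
            = M' a u * M' u v * M' v a / (M' a b * M' b c * M' c a))
      ↔ ∃ α : ℝ, 0 < α ∧ ∀ a b c : E,
          M' a b * M' b c / (M a b * M b c) = α * (M' a c / M a c)) := by
  set f : E → E → ℝ := fun a b => M' a b / M a b with hf
  have hfpos : ∀ a b, 0 < f a b := fun a b => div_pos (hM'pos a b) (hMpos a b)
  have key : ∀ a b c d u v : E,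
      (M a u * M u v * M v d / (M a b * M b c * M c d)
        = M' a u * M' u v * M' v d / (M' a b * M' b c * M' c d))
      ↔ f a u * f u v * f v d = f a b * f b c * f c d := by
    intro a b c d u v
    have p1 := hMpos a b; have p2 := hMpos b c; have p3 := hMpos c d
    have p4 := hM'pos a b; have p5 := hM'pos b c; have p6 := hM'pos c d
    have p7 := hMpos a u; have p8 := hMpos u v; have p9 := hMpos v d
    have p10 := hM'pos a u; have p11 := hM'pos u v; have p12 := hM'pos v d
    rw [div_eq_div_iff (by positivity) (by positivity)]
    simp only [hf]
    rw [div_mul_div_comm, div_mul_div_comm, div_mul_div_comm, div_mul_div_comm,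
      div_eq_div_iff (by positivity) (by positivity)]
    constructor <;> intro h <;> linarith [h]
  have key3 : ∀ (α : ℝ) (a b c : E),
      (M' a b * M' b c / (M a b * M b c) = α * (M' a c / M a c))
      ↔ f a b * f b c = α * f a c := by
    intro α a b c
    simp only [hf]
    rw [div_mul_div_comm]
  -- (3) in f-form implies (1) in f-form
  have h31 : ∀ α : ℝ, (∀ a b c : E, f a b * f b c = α * f a c) →
      ∀ a b c d u v : E, f a u * f u v * f v d = f a b * f b c * f c d := by
    intro α h3 a b c d u v
    have e1 : f a u * f u v * f v d = α * (α * f a d) := by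
      rw [h3 a u v, mul_assoc, h3 a v d]
    have e2 : f a b * f b c * f c d = α * (α * f a d) := by
      rw [h3 a b c, mul_assoc, h3 a c d]
    rw [e1, e2]
  -- (2) in f-form implies (3) in f-form
  have h23 : (∀ a b c u v : E, f a u * f u v * f v a = f a b * f b c * f c a) →
      ∃ α : ℝ, 0 < α ∧ ∀ a b c : E, f a b * f b c = α * f a c := by
    intro h2
    have star : ∀ a b c : E, f b c * f c a = f b b * f b a := by
      intro a b c
      have := h2 a b c b b
      have h' : f a b * (f b b * f b a) = f a b * (f b c * f c a) := by
        ring_nf; ring_nf at this; linarith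
      exact (mul_left_cancel₀ (hfpos a b).ne' h').symm
    have const : ∀ a y : E, f y y = f a a := by
      intro a y
      have := star y a y  -- f a y * f y y = f a a * f a y
      have h' : f a y * f y y = f a y * f a a := by linarith [this]
      exact mul_left_cancel₀ (hfpos a y).ne' h'
    obtain ⟨a₀⟩ := ‹Nonempty E›
    refine ⟨f a₀ a₀, hfpos a₀ a₀, fun a b c => ?_⟩
    have := star c a b  -- f a b * f b c = f a a * f a c
    rw [this, const a₀ a]
  obtain ⟨a₀⟩ := ‹Nonempty E›
  constructor
  · constructor
    · intro h1 a b c u v; exact h1 a b c a u v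
    · intro h2 a b c d u v
      rw [key]
      have h2f : ∀ a b c u v : E, f a u * f u v * f v a = f a b * f b c * f c a := by
        intro a b c u v; rw [← key a b c a u v]; exact h2 a b c u v
      obtain ⟨α, hα, h3⟩ := h23 h2f
      exact h31 α h3 a b c d u v
  · constructor
    · intro h2
      have h2f : ∀ a b c u v : E, f a u * f u v * f v a = f a b * f b c * f c a := by
        intro a b c u v; rw [← key a b c a u v]; exact h2 a b c u v
      obtain ⟨α, hα, h3⟩ := h23 h2f
      exact ⟨α, hα, fun a b c => (key3 α a b c).mpr (h3 a b c)⟩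
    · rintro ⟨α, hα, h3⟩ a b c u v
      rw [key]
      have h3f : ∀ a b c : E, f a b * f b c = α * f a c :=
        fun a b c => (key3 α a b c).mp (h3 a b c)
      exact h31 α h3f a b c a u v
end

section
/- Let E be a finite set and M, M' two positive Markov kernels on E such that for some α > 0, M'(a,b)M'(b,c)/(M(a,b)M(b,c)) = α · M'(a,c)/M(a,c) for all a,b,c ∈ E. Then M = M' (and necessarily α = 1). -/
/-- Uniqueness in Lemma 5.5: two positive Markov kernels on a finite set
satisfying the ratio condition (3) for some `α > 0` coincide, and `α = 1`. -/
theorem stmt13 {E : Type*} [Fintype E] [Nonempty E]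
    (M M' : E → E → ℝ)
    (hMpos : ∀ i j, 0 < M i j) (hMrow : ∀ i, ∑ j, M i j = 1)
    (hM'pos : ∀ i j, 0 < M' i j) (hM'row : ∀ i, ∑ j, M' i j = 1)
    (α : ℝ) (hα : 0 < α)
    (hcond : ∀ a b c : E,
      M' a b * M' b c / (M a b * M b c) = α * (M' a c / M a c)) :
    (∀ a b : E, M a b = M' a b) ∧ α = 1 := by
  classical
  obtain ⟨a₀⟩ := (inferInstance : Nonempty E)
  set g : E → ℝ := fun b => M' a₀ b / M a₀ b with hg
  have hgpos : ∀ b, 0 < g b := fun b => div_pos (hM'pos _ _) (hMpos _ _)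
  have key : ∀ a b, M' a b = α * g b / g a * M a b := by
    intro a b
    have h := hcond a₀ a b
    have e1 := (hMpos a₀ a).ne'
    have e2 := (hMpos a b).ne'
    have e3 := (hMpos a₀ b).ne'
    have e4 := (hM'pos a₀ a).ne'
    simp only [hg]
    field_simp at h ⊢
    linear_combination h
  have hsum : ∀ a, ∑ b, g b * M a b = g a / α := by
    intro a
    have h1 : ∑ b, α * g b / g a * M a b = 1 := by
      rw [← hM'row a]
      exact Finset.sum_congr rfl fun b _ => (key a b).symm
    have h2 : (α / g a) * ∑ b, g b * M a b = 1 := by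
      rw [Finset.mul_sum, ← h1]
      exact Finset.sum_congr rfl fun b _ => by ring
    have hga := (hgpos a).ne'
    field_simp at h2 ⊢
    linarith [h2]
  obtain ⟨amax, -, hmax⟩ := Finset.exists_max_image Finset.univ g Finset.univ_nonempty
  obtain ⟨amin, -, hmin⟩ := Finset.exists_min_image Finset.univ g Finset.univ_nonempty
  have hmaxsum : ∑ b, g b * M amax b ≤ g amax := by
    calc ∑ b, g b * M amax b ≤ ∑ b, g amax * M amax b :=
          Finset.sum_le_sum fun b _ =>
            mul_le_mul_of_nonneg_right (hmax b (Finset.mem_univ b)) (hMpos _ _).le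
      _ = g amax := by rw [← Finset.mul_sum, hMrow, mul_one]
  have hminsum : g amin ≤ ∑ b, g b * M amin b := by
    calc g amin = ∑ b, g amin * M amin b := by rw [← Finset.mul_sum, hMrow, mul_one]
      _ ≤ ∑ b, g b * M amin b :=
          Finset.sum_le_sum fun b _ =>
            mul_le_mul_of_nonneg_right (hmin b (Finset.mem_univ b)) (hMpos _ _).le
  have hα1 : α = 1 := by
    have h1 : g amax / α ≤ g amax := by rw [← hsum amax]; exact hmaxsum
    have h2 : g amin ≤ g amin / α := by rw [← hsum amin]; exact hminsum
    have p1 := hgpos amax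
    have p2 := hgpos amin
    rw [div_le_iff₀ hα] at h1
    rw [le_div_iff₀ hα] at h2
    nlinarith
  have hconst : ∀ b, g b = g amax := by
    have heq : ∑ b, g b * M amax b = ∑ b, g amax * M amax b := by
      rw [hsum amax, hα1, div_one, ← Finset.mul_sum, hMrow, mul_one]
    have := (Finset.sum_eq_sum_iff_of_le
      (fun b _ => mul_le_mul_of_nonneg_right (hmax b (Finset.mem_univ b)) (hMpos _ _).le)).mp heq
    intro b
    have hb := this b (Finset.mem_univ b)
    exact mul_right_cancel₀ (hMpos amax b).ne' hb
  refine ⟨fun a b => ?_, hα1⟩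
  rw [key a b, hα1, hconst a, hconst b]
  field_simp [(hgpos amax).ne']
end

section
/- Let E be a finite set, ρ : E → ℝ a probability distribution with full support (ρ(a) > 0 for all a), and T a nonnegative jump rate matrix on E² with zero diagonal that is mass preserving: T[(a,b),(c,d)] > 0 implies a+b = c+d (where E ⊂ ℕ). Suppose ρ is almost-geometric: there is g : ℕ → ℝ≥0 with ρ(u)ρ(v) = g(u+v) for all u,v ∈ E. Define Z^{ρ}(b,c) = ∑_{(u,v)} T[(u,v),(b,c)] ρ(u)ρ(v)/(ρ(b)ρ(c)) − ∑_{(u,v)} T[(b,c),(u,v)]. Then Z^{ρ}(b,c) = ∑_{(u,v): u+v=b+c} (T[(u,v),(b,c)] − T[(b,c),(u,v)]); in particular Z^{ρ} does not depend on the choice of almost-geometric ρ with the same support. -/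
/-! Mass preservation kills every term with `u + v ≠ b + c`, and on the remaining terms
almost-geometricity gives `ρ u * ρ v = g (b + c) = ρ b * ρ c`, so the weight
`ρ u ρ v / (ρ b ρ c)` is `1`. -/

open Finset

section MassPreserving

variable {T : ℕ × ℕ → ℕ × ℕ → ℝ}

theorem rate_eq_zero_of_add_ne (hTnonneg : ∀ w w', 0 ≤ T w w')
    (hmass : ∀ a b c d : ℕ, 0 < T (a, b) (c, d) → a + b = c + d)
    {a b c d : ℕ} (h : a + b ≠ c + d) : T (a, b) (c, d) = 0 :=
  le_antisymm (not_lt.mp (mt (hmass a b c d) h)) (hTnonneg _ _)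

theorem weighted_balance_term_eq (hTnonneg : ∀ w w', 0 ≤ T w w')
    (hmass : ∀ a b c d : ℕ, 0 < T (a, b) (c, d) → a + b = c + d)
    {ρ : ℕ → ℝ} {b c u v : ℕ} (hbc : ρ b * ρ c ≠ 0)
    (hgeo : u + v = b + c → ρ u * ρ v = ρ b * ρ c) :
    T (u, v) (b, c) * (ρ u * ρ v) / (ρ b * ρ c) - T (b, c) (u, v)
      = if u + v = b + c then T (u, v) (b, c) - T (b, c) (u, v) else 0 := by
  split_ifs with h
  · rw [hgeo h, mul_div_assoc, div_self hbc, mul_one]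
  · rw [rate_eq_zero_of_add_ne hTnonneg hmass h,
      rate_eq_zero_of_add_ne hTnonneg hmass (Ne.symm h)]
    ring

end MassPreserving

theorem stmt15_general (E : Finset ℕ)
    (ρ : ℕ → ℝ) (hρpos : ∀ a ∈ E, 0 < ρ a)
    (T : ℕ × ℕ → ℕ × ℕ → ℝ)
    (hTnonneg : ∀ w w', 0 ≤ T w w')
    (hmass : ∀ a b c d : ℕ, 0 < T (a, b) (c, d) → a + b = c + d)
    (g : ℕ → ℝ) (hgeo : ∀ u ∈ E, ∀ v ∈ E, ρ u * ρ v = g (u + v))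
    (b c : ℕ) (hb : b ∈ E) (hc : c ∈ E) :
    (∑ u ∈ E, ∑ v ∈ E, T (u, v) (b, c) * (ρ u * ρ v) / (ρ b * ρ c))
      - (∑ u ∈ E, ∑ v ∈ E, T (b, c) (u, v))
    = ∑ u ∈ E, ∑ v ∈ E,
        if u + v = b + c then T (u, v) (b, c) - T (b, c) (u, v) else 0 := by
  have hbc : ρ b * ρ c ≠ 0 := (mul_pos (hρpos b hb) (hρpos c hc)).ne'
  rw [← sum_sub_distrib]
  refine sum_congr rfl fun u hu => ?_
  rw [← sum_sub_distrib]
  refine sum_congr rfl fun v hv => weighted_balance_term_eq hTnonneg hmass hbc fun h => ?_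
  rw [hgeo u hu v hv, hgeo b hb c hc, h]

/-- For a mass-preserving jump rate matrix and an almost-geometric full-support
distribution `ρ` on a finite set of integers, the normalized balance
`Z^ρ(b,c)` equals `∑_{u+v=b+c} (T[(u,v),(b,c)] − T[(b,c),(u,v)])`; in
particular it does not depend on the almost-geometric `ρ` chosen. -/
theorem stmt15 (E : Finset ℕ)
    (ρ : ℕ → ℝ) (hρpos : ∀ a ∈ E, 0 < ρ a) (hρsum : ∑ a ∈ E, ρ a = 1)
    (T : ℕ × ℕ → ℕ × ℕ → ℝ)
    (hTnonneg : ∀ w w', 0 ≤ T w w') (hTdiag : ∀ w, T w w = 0)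
    (hmass : ∀ a b c d : ℕ, 0 < T (a, b) (c, d) → a + b = c + d)
    (g : ℕ → ℝ) (hgeo : ∀ u ∈ E, ∀ v ∈ E, ρ u * ρ v = g (u + v))
    (b c : ℕ) (hb : b ∈ E) (hc : c ∈ E) :
    (∑ u ∈ E, ∑ v ∈ E, T (u, v) (b, c) * (ρ u * ρ v) / (ρ b * ρ c))
      - (∑ u ∈ E, ∑ v ∈ E, T (b, c) (u, v))
    = ∑ u ∈ E, ∑ v ∈ E,
        if u + v = b + c then T (u, v) (b, c) - T (b, c) (u, v) else 0 :=
  stmt15_general E ρ hρpos T hTnonneg hmass g hgeo b c hb hc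
end

section
/- Let E be a set with element 0 and Z : E⁴ → ℝ with Z(0,0,0,0) = 0. Define H_n(a₁,…,aₙ) = ∑_{j=1}^{n-3} Z(a_j,a_{j+1},a_{j+2},a_{j+3}) + Z(a_{n-2},a_{n-1},a_n,0) + Z(a_{n-1},a_n,0,0) + Z(a_n,0,0,0) for n ≥ 3 (the sum being empty for n = 3). Suppose Master_7(a₁,…,a₇) = 0 for all a₁,…,a₇ ∈ E (where Master_7 is as in the earlier definition). Then H_n(a₁,…,aₙ) = H_{n-1}(a₁,…,a_{n-1}) for all n ≥ 4, hence H_n(a₁,…,aₙ) = H_3(a₁,a₂,a₃) depends only on the first three letters. -/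
/-- The auxiliary quantity `H_n` (word indexed from `0`, padded with the
distinguished element `e`). -/
def Haux {E : Type*} (e : E) (Z : E → E → E → E → ℝ) (n : ℕ) (a : ℕ → E) : ℝ :=
  (∑ j ∈ Finset.range (n - 3), Z (a j) (a (j+1)) (a (j+2)) (a (j+3)))
    + Z (a (n-3)) (a (n-2)) (a (n-1)) e
    + Z (a (n-2)) (a (n-1)) e e
    + Z (a (n-1)) e e e

section

variable {E : Type*} (e : E) (Z : E → E → E → E → ℝ)

theorem Haux_add_four_sub_Haux_add_three (m : ℕ) (a : ℕ → E) :
    Haux e Z (m + 4) a - Haux e Z (m + 3) a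
      = master7 Z (a m) (a (m + 1)) (a (m + 2)) (a (m + 3)) e e e := by
  simp only [Haux, master7, Nat.add_sub_cancel, Finset.sum_range_succ,
    show m + 4 - 1 = m + 3 from rfl, show m + 4 - 2 = m + 2 from rfl,
    show m + 4 - 3 = m + 1 from rfl, show m + 3 - 1 = m + 2 from rfl,
    show m + 3 - 2 = m + 1 from rfl]
  ring

variable {e Z}

theorem Haux_add_four_eq (hM : ∀ a1 a2 a3 a4 a5 a6 a7 : E, master7 Z a1 a2 a3 a4 a5 a6 a7 = 0)
    (m : ℕ) (a : ℕ → E) : Haux e Z (m + 4) a = Haux e Z (m + 3) a :=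
  sub_eq_zero.mp <| (Haux_add_four_sub_Haux_add_three e Z m a).trans (hM ..)

theorem Haux_eq_Haux_three (hM : ∀ a1 a2 a3 a4 a5 a6 a7 : E, master7 Z a1 a2 a3 a4 a5 a6 a7 = 0)
    {n : ℕ} (hn : 3 ≤ n) (a : ℕ → E) : Haux e Z n a = Haux e Z 3 a := by
  induction n, hn using Nat.le_induction with
  | base => rfl
  | succ m hm ih =>
    obtain ⟨k, rfl⟩ := Nat.exists_eq_add_of_le' hm
    rw [Haux_add_four_eq hM, ih]

end

theorem stmt18_general {E : Type*} (e : E) (Z : E → E → E → E → ℝ)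
    (hM : ∀ a1 a2 a3 a4 a5 a6 a7 : E, master7 Z a1 a2 a3 a4 a5 a6 a7 = 0) :
    (∀ n : ℕ, 4 ≤ n → ∀ a : ℕ → E, Haux e Z n a = Haux e Z (n-1) a)
    ∧ (∀ n : ℕ, 3 ≤ n → ∀ a : ℕ → E, Haux e Z n a = Haux e Z 3 a) := by
  refine ⟨fun n hn a => ?_, fun n hn a => Haux_eq_Haux_three hM hn a⟩
  obtain ⟨m, rfl⟩ := Nat.exists_eq_add_of_le' hn
  exact Haux_add_four_eq hM m a

/-- If `Z(0,0,0,0) = 0` and `Master_7 ≡ 0`, then `H_n = H_{n-1}` for `n ≥ 4`,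
hence `H_n = H_3` depends only on the first three letters. -/
theorem stmt18 {E : Type*} (e : E) (Z : E → E → E → E → ℝ)
    (hZ0 : Z e e e e = 0)
    (hM : ∀ a1 a2 a3 a4 a5 a6 a7 : E, master7 Z a1 a2 a3 a4 a5 a6 a7 = 0) :
    (∀ n : ℕ, 4 ≤ n → ∀ a : ℕ → E, Haux e Z n a = Haux e Z (n-1) a)
    ∧ (∀ n : ℕ, 3 ≤ n → ∀ a : ℕ → E, Haux e Z n a = Haux e Z 3 a) :=
  stmt18_general e Z hM
end

section
/- Let E be a set and Z : E⁴ → ℝ such that Master_7 ≡ 0 (Master_7 as defined from Z). Define NCycle_n(x) = ∑_{j=0}^{n-1} Z(x_j,x_{j+1},x_{j+2},x_{j+3}) with indices mod n. Then for every n ≥ 7 and every word x of length n, NCycle_n(x) = NCycle_{n-1}(x with its (n−4)-th letter removed) + Master_7(x_{n-7},…,x_{n-1}) = NCycle_{n-1}(x^{\{n-4\}}); consequently if additionally Z(0,0,0,0) = 0 for some 0 ∈ E then NCycle_n ≡ 0 for all n ≥ 3. -/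
/-- The word `x` (of length `n`) with its letter at position `k` deleted. -/
def delAt {E : Type*} (k : ℕ) (x : ℕ → E) : ℕ → E :=
  fun j => if j < k then x j else x (j+1)

lemma Function.Periodic.sum_range_mul {M : Type*} [AddCommMonoid M] {n : ℕ} {f : ℕ → M}
    (hf : Function.Periodic f n) (g : ℕ) :
    ∑ j ∈ Finset.range (g * n), f j = g • ∑ j ∈ Finset.range n, f j := by
  induction g with
  | zero => simp
  | succ g ih =>
    rw [Nat.succ_mul, Finset.sum_range_add, ih, succ_nsmul]
    exact congrArg _ (Finset.sum_congr rfl fun j _ => by rw [add_comm]; exact hf.nat_mul g j)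

section
variable {E : Type*} (Z : E → E → E → E → ℝ)

lemma ncyc_add_three (m : ℕ) (x : ℕ → E) :
    ncyc Z (m + 3) x
      = ∑ j ∈ Finset.range m, Z (x j) (x (j + 1)) (x (j + 2)) (x (j + 3))
        + Z (x m) (x (m + 1)) (x (m + 2)) (x 0)
        + Z (x (m + 1)) (x (m + 2)) (x 0) (x 1)
        + Z (x (m + 2)) (x 0) (x 1) (x 2) := by
  have hbody : ∀ j < m + 3, j % (m + 3) = j := fun j hj => Nat.mod_eq_of_lt hj
  have hwrap : ∀ i < 3, (m + 3 + i) % (m + 3) = i := fun i hi => by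
    rw [Nat.add_mod_left, hbody i (by omega)]
  rw [ncyc, Finset.sum_range_add, Finset.sum_range_succ, Finset.sum_range_succ,
    Finset.sum_range_one]
  simp only [add_assoc]
  congr 1
  · refine Finset.sum_congr rfl fun j hj => ?_
    rw [Finset.mem_range] at hj
    rw [hbody j (by omega), hbody (j + 1) (by omega), hbody (j + 2) (by omega),
      hbody (j + 3) (by omega)]
  · simp only [Nat.reduceAdd, zero_add, add_zero, hbody m (by omega), hbody (m + 1) (by omega),
      hbody (m + 2) (by omega), Nat.mod_self, (hwrap 1 (by norm_num) : (m + 4) % (m + 3) = 1),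
      (hwrap 2 (by norm_num) : (m + 5) % (m + 3) = 2)]

lemma delAt_of_lt {k j : ℕ} (h : j < k) (x : ℕ → E) : delAt k x j = x j := if_pos h

lemma delAt_of_le {k j : ℕ} (h : k ≤ j) (x : ℕ → E) : delAt k x j = x (j + 1) :=
  if_neg (Nat.not_lt.mpr h)

lemma ncyc_add_seven (k : ℕ) (x : ℕ → E) :
    ncyc Z (k + 7) x
      = ncyc Z (k + 6) (delAt (k + 3) x)
        + master7 Z (x k) (x (k + 1)) (x (k + 2)) (x (k + 3)) (x (k + 4)) (x (k + 5))
            (x (k + 6)) := by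
  have hhead : ∑ j ∈ Finset.range k, Z (delAt (k + 3) x j) (delAt (k + 3) x (j + 1))
        (delAt (k + 3) x (j + 2)) (delAt (k + 3) x (j + 3))
      = ∑ j ∈ Finset.range k, Z (x j) (x (j + 1)) (x (j + 2)) (x (j + 3)) := by
    refine Finset.sum_congr rfl fun j hj => ?_
    rw [Finset.mem_range] at hj
    rw [delAt_of_lt (by omega : j < k + 3), delAt_of_lt (by omega : j + 1 < k + 3),
      delAt_of_lt (by omega : j + 2 < k + 3), delAt_of_lt (by omega : j + 3 < k + 3)]
  rw [show k + 7 = (k + 4) + 3 from rfl, show k + 6 = (k + 3) + 3 from rfl,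
    ncyc_add_three, ncyc_add_three, Finset.sum_range_add, Finset.sum_range_add, hhead]
  simp only [Finset.sum_range_succ, Finset.sum_range_zero, add_zero, master7, delAt]
  norm_num
  ring_nf

lemma ncyc_eq_ncyc_delAt_add_master7 {n : ℕ} (hn : 7 ≤ n) (x : ℕ → E) :
    ncyc Z n x
      = ncyc Z (n - 1) (delAt (n - 4) x)
        + master7 Z (x (n - 7)) (x (n - 6)) (x (n - 5)) (x (n - 4)) (x (n - 3))
            (x (n - 2)) (x (n - 1)) := by
  obtain ⟨k, rfl⟩ := Nat.exists_eq_add_of_le' hn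
  simpa using ncyc_add_seven Z k x

variable {Z}

lemma ncyc_eq_ncyc_delAt (hM : ∀ a1 a2 a3 a4 a5 a6 a7, master7 Z a1 a2 a3 a4 a5 a6 a7 = 0)
    {n : ℕ} (hn : 7 ≤ n) (x : ℕ → E) :
    ncyc Z n x = ncyc Z (n - 1) (delAt (n - 4) x) := by
  rw [ncyc_eq_ncyc_delAt_add_master7 Z hn, hM, add_zero]

lemma ncyc_eq_ncyc_delete_block (hM : ∀ a1 a2 a3 a4 a5 a6 a7, master7 Z a1 a2 a3 a4 a5 a6 a7 = 0)
    {p : ℕ} (hp : 3 ≤ p) (q : ℕ) (x : ℕ → E) :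
    ncyc Z (p + q + 3) x = ncyc Z (p + 3) (fun j => if j < p then x j else x (j + q)) := by
  induction q generalizing x with
  | zero => simp
  | succ q ih =>
    have hdel := ncyc_eq_ncyc_delAt hM (show 7 ≤ p + (q + 1) + 3 by omega) x
    rw [show p + (q + 1) + 3 - 1 = p + q + 3 by omega, show p + (q + 1) + 3 - 4 = p + q by omega]
      at hdel
    rw [hdel, ih]
    congr 1
    funext j
    split_ifs with hj
    · exact delAt_of_lt (by omega) x
    · rw [delAt_of_le (by omega), add_assoc]

lemma ncyc_mul_of_periodic (n g : ℕ) (x : ℕ → E) :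
    ncyc Z (g * n) (fun j => x (j % n)) = g * ncyc Z n x := by
  set f : ℕ → ℝ := fun j => Z (x (j % n)) (x ((j + 1) % n)) (x ((j + 2) % n)) (x ((j + 3) % n))
  have hf : Function.Periodic f n := fun j => by
    simp only [f, add_right_comm j n, Nat.add_mod_right]
  calc ncyc Z (g * n) (fun j => x (j % n)) = ∑ j ∈ Finset.range (g * n), f j :=
        Finset.sum_congr rfl fun j _ => by simp only [Nat.mod_mod_of_dvd _ (dvd_mul_left n g), f]
    _ = g * ncyc Z n x := by rw [hf.sum_range_mul, nsmul_eq_mul]; rfl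
end

/-- If `Master_7 ≡ 0`, then for `n ≥ 7`,
`NCycle_n(x) = NCycle_{n-1}(x^{{n-4}}) + Master_7(x_{n-7},…,x_{n-1})
             = NCycle_{n-1}(x^{{n-4}})`;
consequently, if additionally `Z(0,0,0,0) = 0`, then `NCycle_n ≡ 0` for all
`n ≥ 3`. -/
theorem stmt19 {E : Type*} (e : E) (Z : E → E → E → E → ℝ)
    (hM : ∀ a1 a2 a3 a4 a5 a6 a7 : E, master7 Z a1 a2 a3 a4 a5 a6 a7 = 0) :
    (∀ n : ℕ, 7 ≤ n → ∀ x : ℕ → E,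
      ncyc Z n x
        = ncyc Z (n-1) (delAt (n-4) x)
          + master7 Z (x (n-7)) (x (n-6)) (x (n-5)) (x (n-4)) (x (n-3))
              (x (n-2)) (x (n-1))
      ∧ ncyc Z n x = ncyc Z (n-1) (delAt (n-4) x))
    ∧ (Z e e e e = 0 →
        ∀ n : ℕ, 3 ≤ n → ∀ x : ℕ → E, ncyc Z n x = 0) := by
  refine ⟨fun n hn x => ⟨ncyc_eq_ncyc_delAt_add_master7 Z hn x, ncyc_eq_ncyc_delAt hM hn x⟩,
    fun _ n hn x => ?_⟩
  have hdel := ncyc_eq_ncyc_delete_block hM (show 3 ≤ 2 * n - 3 by omega) n fun j => x (j % n)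
  have hperiodic : (fun j => if j < 2 * n - 3 then x (j % n) else x ((j + n) % n))
      = fun j => x (j % n) := by
    funext j
    split_ifs <;> simp
  rw [hperiodic, show 2 * n - 3 + n + 3 = 3 * n by omega, show 2 * n - 3 + 3 = 2 * n by omega,
    ncyc_mul_of_periodic, ncyc_mul_of_periodic] at hdel
  push_cast at hdel
  linarith
end
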